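/- For finitely supported probability distributions μ, ν on a pseudometric space (X,d), the Wasserstein form of the Lévy-Prokhorov distance satisfies: inf_{ρ ∈ Γ(μ,ν)} inf { ε ≥ 0 | ρ({(x,y) | d(x,y) > ε}) ≤ ε } = inf_{ε ≥ 0} max( ε, inf_{ρ ∈ Γ(μ,ν)} ρ({(x,y) | d(x,y) ≥ ε}) ), where Γ(μ,ν) is the set of couplings of μ and ν. -/

import Mathlib

/-- Total mass of a finitely supported weight function on a set. -/
noncomputable def mass {X : Type*} (s : Finset X) (μ : X → ℝ) (A : Set X) : ℝ :=
  ∑ x ∈ s, Set.indicator A μ x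

/-- `IsCoupling u ρ s μ t ν` says that the finitely supported distribution `ρ`
(with support `u`) on `X × X` has marginals `μ` (support `s`) and `ν` (support `t`). -/
def IsCoupling {X : Type*} (u : Finset (X × X)) (ρ : X × X → ℝ)
    (s : Finset X) (μ : X → ℝ) (t : Finset X) (ν : X → ℝ) : Prop :=
  (∀ p, 0 ≤ ρ p) ∧ (∀ p ∉ u, ρ p = 0) ∧ (∑ p ∈ u, ρ p = 1) ∧
  (∀ x, mass u ρ {p | p.1 = x} = μ x) ∧ (∀ y, mass u ρ {p | p.2 = y} = ν y)

lemma mass_nonneg' {X : Type*} (s : Finset X) (μ : X → ℝ) (A : Set X)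
    (h : ∀ x, 0 ≤ μ x) : 0 ≤ mass s μ A :=
  Finset.sum_nonneg fun x _ => Set.indicator_apply_nonneg fun _ => h x

lemma mass_mono' {X : Type*} (s : Finset X) (μ : X → ℝ) {A B : Set X}
    (h : ∀ x, 0 ≤ μ x) (hAB : A ⊆ B) : mass s μ A ≤ mass s μ B :=
  Finset.sum_le_sum fun x _ =>
    Set.indicator_le_indicator_of_subset hAB (fun a => h a) x

lemma exists_coupling {X : Type*} (μ ν : X → ℝ) (s t : Finset X)
    (hμ0 : ∀ x, 0 ≤ μ x) (hμs : ∀ x ∉ s, μ x = 0) (hμ1 : ∑ x ∈ s, μ x = 1)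
    (hν0 : ∀ x, 0 ≤ ν x) (hνt : ∀ x ∉ t, ν x = 0) (hν1 : ∑ x ∈ t, ν x = 1) :
    ∃ u ρ, IsCoupling u ρ s μ t ν := by
  classical
  refine ⟨s ×ˢ t, fun p => μ p.1 * ν p.2, ?_, ?_, ?_, ?_, ?_⟩
  · exact fun p => mul_nonneg (hμ0 _) (hν0 _)
  · intro p hp
    rw [Finset.mem_product, not_and_or] at hp
    rcases hp with h | h
    · show μ p.1 * ν p.2 = 0
      rw [hμs _ h, zero_mul]
    · show μ p.1 * ν p.2 = 0
      rw [hνt _ h, mul_zero]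
  · rw [Finset.sum_product]
    simp_rw [← Finset.mul_sum, hν1, mul_one, hμ1]
  · intro x
    unfold mass
    rw [Finset.sum_product]
    have key : ∀ a ∈ s, (∑ b ∈ t, Set.indicator {p : X × X | p.1 = x}
        (fun p => μ p.1 * ν p.2) (a, b)) = if a = x then μ a else 0 := by
      intro a _
      by_cases hax : a = x
      · simp only [Set.indicator, Set.mem_setOf_eq, hax, if_true]
        rw [← Finset.mul_sum, hν1, mul_one]
      · simp [Set.indicator, hax]
    rw [Finset.sum_congr rfl key, Finset.sum_ite_eq' s x μ]
    by_cases hx : x ∈ s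
    · simp [hx]
    · simp [hx, hμs x hx]
  · intro y
    unfold mass
    rw [Finset.sum_product]
    have key : ∀ a ∈ s, (∑ b ∈ t, Set.indicator {p : X × X | p.2 = y}
        (fun p => μ p.1 * ν p.2) (a, b)) = μ a * (if y ∈ t then ν y else 0) := by
      intro a _
      have : ∀ b ∈ t, Set.indicator {p : X × X | p.2 = y}
          (fun p => μ p.1 * ν p.2) (a, b) = if b = y then μ a * ν b else 0 := by
        intro b _
        by_cases hby : b = y
        · simp [Set.indicator, hby]
        · simp [Set.indicator, hby]
      rw [Finset.sum_congr rfl this, Finset.sum_ite_eq' t y (fun b => μ a * ν b)]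
      by_cases hy : y ∈ t
      · simp [hy]
      · simp [hy]
    rw [Finset.sum_congr rfl key, ← Finset.sum_mul, hμ1, one_mul]
    by_cases hy : y ∈ t
    · simp [hy]
    · simp [hy, hνt y hy]

theorem levy_prokhorov_wasserstein_form {X : Type*} (d : X → X → ℝ)
    (hbound : ∀ x y, d x y ∈ Set.Icc (0:ℝ) 1)
    (hrefl : ∀ x, d x x = 0)
    (hsymm : ∀ x y, d x y = d y x)
    (htri : ∀ x y z, d x z ≤ d x y + d y z)
    (μ ν : X → ℝ) (s t : Finset X)
    (hμ0 : ∀ x, 0 ≤ μ x) (hμs : ∀ x ∉ s, μ x = 0) (hμ1 : ∑ x ∈ s, μ x = 1)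
    (hν0 : ∀ x, 0 ≤ ν x) (hνt : ∀ x ∉ t, ν x = 0) (hν1 : ∑ x ∈ t, ν x = 1) :
    sInf {v : ℝ | ∃ u ρ, IsCoupling u ρ s μ t ν ∧
        v = sInf {ε : ℝ | 0 ≤ ε ∧ mass u ρ {p | d p.1 p.2 > ε} ≤ ε}} =
    sInf {v : ℝ | ∃ ε : ℝ, 0 ≤ ε ∧
        v = max ε (sInf {w : ℝ | ∃ u ρ, IsCoupling u ρ s μ t ν ∧
          w = mass u ρ {p | d p.1 p.2 ≥ ε}})} := by
  classical
  obtain ⟨u₀, ρ₀, hρ₀⟩ := exists_coupling μ ν s t hμ0 hμs hμ1 hν0 hνt hν1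
  -- abbreviations
  set A := {v : ℝ | ∃ u ρ, IsCoupling u ρ s μ t ν ∧
      v = sInf {ε : ℝ | 0 ≤ ε ∧ mass u ρ {p | d p.1 p.2 > ε} ≤ ε}} with hA
  set B := {v : ℝ | ∃ ε : ℝ, 0 ≤ ε ∧
      v = max ε (sInf {w : ℝ | ∃ u ρ, IsCoupling u ρ s μ t ν ∧
        w = mass u ρ {p | d p.1 p.2 ≥ ε}})} with hB
  -- facts about the inner set S(u,ρ)
  have hSone : ∀ u (ρ : X × X → ℝ), IsCoupling u ρ s μ t ν →
      (1:ℝ) ∈ {ε : ℝ | 0 ≤ ε ∧ mass u ρ {p | d p.1 p.2 > ε} ≤ ε} := by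
    intro u ρ hρ
    have hempty : {p : X × X | d p.1 p.2 > 1} = ∅ :=
      Set.eq_empty_of_forall_notMem fun p hp =>
        absurd (hbound p.1 p.2).2 (not_le.mpr hp)
    refine ⟨zero_le_one, ?_⟩
    rw [hempty]
    simp [mass]
  have hSbdd : ∀ u (ρ : X × X → ℝ),
      BddBelow {ε : ℝ | 0 ≤ ε ∧ mass u ρ {p | d p.1 p.2 > ε} ≤ ε} :=
    fun u ρ => ⟨0, fun x hx => hx.1⟩
  have hSinf_nonneg : ∀ u (ρ : X × X → ℝ), IsCoupling u ρ s μ t ν →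
      0 ≤ sInf {ε : ℝ | 0 ≤ ε ∧ mass u ρ {p | d p.1 p.2 > ε} ≤ ε} :=
    fun u ρ hρ => le_csInf ⟨1, hSone u ρ hρ⟩ fun x hx => hx.1
  -- facts about M ε
  have hMmem : ∀ ε u (ρ : X × X → ℝ), IsCoupling u ρ s μ t ν →
      mass u ρ {p | d p.1 p.2 ≥ ε} ∈ {w : ℝ | ∃ u ρ, IsCoupling u ρ s μ t ν ∧
        w = mass u ρ {p | d p.1 p.2 ≥ ε}} :=
    fun ε u ρ hρ => ⟨u, ρ, hρ, rfl⟩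
  have hMne : ∀ ε : ℝ, Set.Nonempty {w : ℝ | ∃ u ρ, IsCoupling u ρ s μ t ν ∧
      w = mass u ρ {p | d p.1 p.2 ≥ ε}} :=
    fun ε => ⟨_, hMmem ε u₀ ρ₀ hρ₀⟩
  have hMbdd : ∀ ε : ℝ, BddBelow {w : ℝ | ∃ u ρ, IsCoupling u ρ s μ t ν ∧
      w = mass u ρ {p | d p.1 p.2 ≥ ε}} := by
    intro ε
    refine ⟨0, fun w hw => ?_⟩
    obtain ⟨u, ρ, hρ, rfl⟩ := hw
    exact mass_nonneg' u ρ _ hρ.1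
  have hMinf_nonneg : ∀ ε : ℝ, 0 ≤ sInf {w : ℝ | ∃ u ρ, IsCoupling u ρ s μ t ν ∧
      w = mass u ρ {p | d p.1 p.2 ≥ ε}} := by
    intro ε
    refine le_csInf (hMne ε) fun w hw => ?_
    obtain ⟨u, ρ, hρ, rfl⟩ := hw
    exact mass_nonneg' u ρ _ hρ.1
  have hAne : A.Nonempty := ⟨_, u₀, ρ₀, hρ₀, rfl⟩
  have hAbdd : BddBelow A := by
    refine ⟨0, fun v hv => ?_⟩
    obtain ⟨u, ρ, hρ, rfl⟩ := hv
    exact hSinf_nonneg u ρ hρ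
  have hBne : B.Nonempty := ⟨_, 0, le_refl 0, rfl⟩
  have hBbdd : BddBelow B := by
    refine ⟨0, fun v hv => ?_⟩
    obtain ⟨ε, hε, rfl⟩ := hv
    exact le_trans hε (le_max_left _ _)
  apply le_antisymm
  · -- sInf A ≤ sInf B
    refine le_csInf hBne fun v hv => ?_
    obtain ⟨ε, hε, rfl⟩ := hv
    set M := {w : ℝ | ∃ u ρ, IsCoupling u ρ s μ t ν ∧
        w = mass u ρ {p | d p.1 p.2 ≥ ε}} with hM
    refine le_of_forall_pos_le_add fun η hη => ?_
    obtain ⟨w, hwM, hwlt⟩ := Real.lt_sInf_add_pos (hMne ε) hη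
    obtain ⟨u, ρ, hρ, rfl⟩ := hwM
    set e := max ε (mass u ρ {p | d p.1 p.2 ≥ ε}) with he
    have heS : e ∈ {ε' : ℝ | 0 ≤ ε' ∧ mass u ρ {p | d p.1 p.2 > ε'} ≤ ε'} := by
      constructor
      · exact le_trans hε (le_max_left _ _)
      · refine le_trans (mass_mono' u ρ hρ.1 ?_) (le_max_right _ _)
        intro p hp
        have hεe : ε ≤ e := he ▸ le_max_left _ _
        exact le_trans hεe (le_of_lt hp)
    calc sInf A ≤ sInf {ε' : ℝ | 0 ≤ ε' ∧ mass u ρ {p | d p.1 p.2 > ε'} ≤ ε'} :=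
          csInf_le hAbdd ⟨u, ρ, hρ, rfl⟩
      _ ≤ e := csInf_le (hSbdd u ρ) heS
      _ ≤ max ε (sInf M) + η := by
          apply max_le
          · exact le_add_of_le_of_nonneg (le_max_left _ _) (le_of_lt hη)
          · calc mass u ρ {p | d p.1 p.2 ≥ ε} ≤ sInf M + η := le_of_lt hwlt
              _ ≤ max ε (sInf M) + η := by
                  exact add_le_add_left (le_max_right _ _) η
  · -- sInf B ≤ sInf A
    refine le_csInf hAne fun v hv => ?_
    obtain ⟨u, ρ, hρ, rfl⟩ := hv
    set S := {ε : ℝ | 0 ≤ ε ∧ mass u ρ {p | d p.1 p.2 > ε} ≤ ε} with hS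
    refine le_of_forall_pos_le_add fun η hη => ?_
    obtain ⟨ε, hεS, hεlt⟩ := Real.lt_sInf_add_pos ⟨1, hSone u ρ hρ⟩ (half_pos hη)
    set ε' := ε + η / 2 with hε'
    have hε'0 : 0 ≤ ε' := add_nonneg hεS.1 (le_of_lt (half_pos hη))
    set M' := {w : ℝ | ∃ u ρ, IsCoupling u ρ s μ t ν ∧
        w = mass u ρ {p | d p.1 p.2 ≥ ε'}} with hM'
    have hm' : sInf M' ≤ ε := by
      refine le_trans (csInf_le (hMbdd ε') (hMmem ε' u ρ hρ)) ?_
      refine le_trans (mass_mono' u ρ hρ.1 ?_) hεS.2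
      intro p hp
      exact lt_of_lt_of_le (lt_add_of_pos_right ε (half_pos hη)) hp
    have hmemB : max ε' (sInf M') ∈ B := ⟨ε', hε'0, rfl⟩
    calc sInf B ≤ max ε' (sInf M') := csInf_le hBbdd hmemB
      _ ≤ ε + η / 2 := max_le (le_refl _) (le_trans hm' (le_add_of_nonneg_right
            (le_of_lt (half_pos hη))))
      _ ≤ sInf S + η := by linarith
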